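/- Let Z_0, Z_1, …, Z_n be real-valued random variables. Assume there exist positive constants σ_0, …, σ_n and c_0, …, c_n such that for each i and any t in [0, 1/c_i), log E[exp(t Z_i)] ≤ (σ_i t)² / (1 − c_i t). Then, setting σ = σ_0 + ⋯ + σ_n and C = c_0 + ⋯ + c_n, for any t in [0, 1/C), log E[exp(t (Z_0 + ⋯ + Z_n))] ≤ (σ t)² / (1 − C t). -/

import Mathlib

open MeasureTheory Real Finset
open ProbabilityTheory

/-! Hölder's inequality with weights `w i > 0` summing to one bounds the cumulant generating
function of a sum: `log E exp (t ∑ Z i) ≤ ∑ w i * log E exp ((t / w i) Z i)`. The hypotheses turn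
the `i`-th term into `(σ i t)² / (w i - c i t)`, and choosing `w i - c i t` proportional to `σ i`
(the optimal choice, by Cauchy–Schwarz, under `∑ (w i - c i t) = 1 - C t`) makes the sum exactly
`(σ t)² / (1 - C t)`. -/

section

variable {Ω ι : Type*} [MeasurableSpace Ω] {μ : Measure Ω}

lemma aemeasurable_of_integrable_exp {Y : Ω → ℝ} (h : Integrable (fun ω => exp (Y ω)) μ) :
    AEMeasurable Y μ := by
  simpa only [log_exp] using h.aestronglyMeasurable.aemeasurable.log

lemma lintegral_exp_sum_mul_le_prod {s : Finset ι} {w : ι → ℝ} (hw₀ : ∀ i ∈ s, 0 ≤ w i)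
    (hw₁ : ∑ i ∈ s, w i = 1) {Y : ι → Ω → ℝ} (hY : ∀ i ∈ s, AEMeasurable (Y i) μ) :
    ∫⁻ ω, ENNReal.ofReal (exp (∑ i ∈ s, w i * Y i ω)) ∂μ ≤
      ∏ i ∈ s, (∫⁻ ω, ENNReal.ofReal (exp (Y i ω)) ∂μ) ^ w i := by
  have hpow : ∀ i ω, ENNReal.ofReal (exp (Y i ω)) ^ w i = ENNReal.ofReal (exp (w i * Y i ω)) :=
    fun i ω => by
      rw [ENNReal.ofReal_rpow_of_pos (exp_pos _), ← exp_mul, mul_comm]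
  calc ∫⁻ ω, ENNReal.ofReal (exp (∑ i ∈ s, w i * Y i ω)) ∂μ
      = ∫⁻ ω, ∏ i ∈ s, ENNReal.ofReal (exp (Y i ω)) ^ w i ∂μ := by
        simp_rw [hpow, exp_sum, ENNReal.ofReal_prod_of_nonneg fun i _ => (exp_pos _).le]
    _ ≤ _ := ENNReal.lintegral_prod_norm_pow_le s
        (fun i hi => (hY i hi).exp.ennreal_ofReal) hw₁ hw₀

lemma integrable_exp_sum_mul {s : Finset ι} {w : ι → ℝ} (hw₀ : ∀ i ∈ s, 0 ≤ w i)
    (hw₁ : ∑ i ∈ s, w i = 1) {Y : ι → Ω → ℝ}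
    (hY : ∀ i ∈ s, Integrable (fun ω => exp (Y i ω)) μ) :
    Integrable (fun ω => exp (∑ i ∈ s, w i * Y i ω)) μ := by
  have hYm : ∀ i ∈ s, AEMeasurable (Y i) μ := fun i hi => aemeasurable_of_integrable_exp (hY i hi)
  refine ⟨(Finset.aemeasurable_fun_sum s fun i hi => (hYm i hi).const_mul (w i)).exp
    |>.aestronglyMeasurable, ?_⟩
  rw [hasFiniteIntegral_iff_ofReal (ae_of_all _ fun _ => (exp_pos _).le)]
  refine (lintegral_exp_sum_mul_le_prod hw₀ hw₁ hYm).trans_lt ?_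
  exact ENNReal.prod_lt_top fun i hi =>
    ENNReal.rpow_lt_top_of_nonneg (hw₀ i hi) (hY i hi).lintegral_lt_top.ne

lemma integral_exp_sum_mul_le_prod {s : Finset ι} {w : ι → ℝ} (hw₀ : ∀ i ∈ s, 0 ≤ w i)
    (hw₁ : ∑ i ∈ s, w i = 1) {Y : ι → Ω → ℝ}
    (hY : ∀ i ∈ s, Integrable (fun ω => exp (Y i ω)) μ) :
    ∫ ω, exp (∑ i ∈ s, w i * Y i ω) ∂μ ≤ ∏ i ∈ s, (∫ ω, exp (Y i ω) ∂μ) ^ w i := by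
  have hexp : ∀ f : Ω → ℝ, 0 ≤ᵐ[μ] fun ω => exp (f ω) :=
    fun _ => ae_of_all _ fun _ => (exp_pos _).le
  have hI : ∀ i ∈ s, 0 ≤ ∫ ω, exp (Y i ω) ∂μ := fun i _ => integral_nonneg fun _ => (exp_pos _).le
  rw [← ENNReal.ofReal_le_ofReal_iff (prod_nonneg fun i hi => rpow_nonneg (hI i hi) _),
    ofReal_integral_eq_lintegral_ofReal (integrable_exp_sum_mul hw₀ hw₁ hY) (hexp _),
    ENNReal.ofReal_prod_of_nonneg fun i hi => rpow_nonneg (hI i hi) _]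
  refine (lintegral_exp_sum_mul_le_prod hw₀ hw₁
    fun i hi => aemeasurable_of_integrable_exp (hY i hi)).trans_eq (prod_congr rfl fun i hi => ?_)
  rw [← ofReal_integral_eq_lintegral_ofReal (hY i hi) (hexp _),
    ENNReal.ofReal_rpow_of_nonneg (hI i hi) (hw₀ i hi)]

lemma cgf_sum_le [NeZero μ] {s : Finset ι}
    {w : ι → ℝ} (hw₀ : ∀ i ∈ s, 0 < w i) (hw₁ : ∑ i ∈ s, w i = 1) {X : ι → Ω → ℝ} {t : ℝ}
    (hX : ∀ i ∈ s, Integrable (fun ω => exp (t / w i * X i ω)) μ) :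
    cgf (fun ω => ∑ i ∈ s, X i ω) μ t ≤ ∑ i ∈ s, w i * cgf (X i) μ (t / w i) := by
  have hw : ∀ i ∈ s, 0 ≤ w i := fun i hi => (hw₀ i hi).le
  have hsum : ∀ ω, t * ∑ i ∈ s, X i ω = ∑ i ∈ s, w i * (t / w i * X i ω) := fun ω => by
    rw [mul_sum]
    exact sum_congr rfl fun i hi => by field_simp [(hw₀ i hi).ne']
  have hmgf : ∀ i ∈ s, 0 < mgf (X i) μ (t / w i) := fun i hi => integral_exp_pos (hX i hi)
  calc cgf (fun ω => ∑ i ∈ s, X i ω) μ t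
      = log (∫ ω, exp (∑ i ∈ s, w i * (t / w i * X i ω)) ∂μ) := by simp only [cgf, mgf, hsum]
    _ ≤ log (∏ i ∈ s, mgf (X i) μ (t / w i) ^ w i) :=
        log_le_log (integral_exp_pos (integrable_exp_sum_mul hw hw₁ hX))
          (integral_exp_sum_mul_le_prod hw hw₁ hX)
    _ = ∑ i ∈ s, w i * cgf (X i) μ (t / w i) := by
        rw [log_prod fun i hi => (rpow_pos_of_pos (hmgf i hi) _).ne']
        exact sum_congr rfl fun i hi => log_rpow (hmgf i hi) _

lemma mul_sq_div_one_sub_mul_div {a : ℝ} (ha : a ≠ 0) (σ c t : ℝ) :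
    a * ((σ * (t / a)) ^ 2 / (1 - c * (t / a))) = (σ * t) ^ 2 / (a - c * t) := by
  rw [show 1 - c * (t / a) = (a - c * t) / a by field_simp]
  by_cases hac : a - c * t = 0
  · simp [hac]
  · field_simp

theorem cgf_sum_le_of_cgf_le [NeZero μ] {s : Finset ι} (hs : s.Nonempty) {X : ι → Ω → ℝ}
    {σ c : ι → ℝ} (hσ : ∀ i ∈ s, 0 < σ i) (hc : ∀ i ∈ s, 0 < c i)
    (hint : ∀ i ∈ s, ∀ t : ℝ, 0 ≤ t → t < 1 / c i → Integrable (fun ω => exp (t * X i ω)) μ)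
    (h : ∀ i ∈ s, ∀ t : ℝ, 0 ≤ t → t < 1 / c i → cgf (X i) μ t ≤ (σ i * t) ^ 2 / (1 - c i * t))
    {t : ℝ} (ht₀ : 0 ≤ t) (ht : t < 1 / ∑ i ∈ s, c i) :
    cgf (fun ω => ∑ i ∈ s, X i ω) μ t ≤
      ((∑ i ∈ s, σ i) * t) ^ 2 / (1 - (∑ i ∈ s, c i) * t) := by
  set S := ∑ i ∈ s, σ i
  set C := ∑ i ∈ s, c i
  have hS : 0 < S := sum_pos hσ hs
  have hCt : 0 < 1 - C * t := by
    rw [lt_div_iff₀ (sum_pos hc hs)] at ht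
    linarith
  set w : ι → ℝ := fun i => c i * t + σ i / S * (1 - C * t)
  have hgap : ∀ i ∈ s, w i - c i * t = σ i / S * (1 - C * t) := fun i _ => by ring
  have hgap_pos : ∀ i ∈ s, 0 < w i - c i * t := fun i hi => by
    rw [hgap i hi]
    exact mul_pos (div_pos (hσ i hi) hS) hCt
  have hw₀ : ∀ i ∈ s, 0 < w i := fun i hi => by
    linarith [hgap_pos i hi, mul_nonneg (hc i hi).le ht₀]
  have hw₁ : ∑ i ∈ s, w i = 1 := by
    simp only [w, sum_add_distrib, ← sum_mul, ← sum_div]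
    rw [div_self hS.ne']
    ring
  have hrange : ∀ i ∈ s, 0 ≤ t / w i ∧ t / w i < 1 / c i := fun i hi => by
    refine ⟨div_nonneg ht₀ (hw₀ i hi).le, ?_⟩
    rw [div_lt_div_iff₀ (hw₀ i hi) (hc i hi)]
    linarith [hgap_pos i hi]
  calc cgf (fun ω => ∑ i ∈ s, X i ω) μ t
      ≤ ∑ i ∈ s, w i * cgf (X i) μ (t / w i) :=
        cgf_sum_le hw₀ hw₁ fun i hi => hint i hi _ (hrange i hi).1 (hrange i hi).2
    _ ≤ ∑ i ∈ s, w i * ((σ i * (t / w i)) ^ 2 / (1 - c i * (t / w i))) :=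
        sum_le_sum fun i hi => mul_le_mul_of_nonneg_left
          (h i hi _ (hrange i hi).1 (hrange i hi).2) (hw₀ i hi).le
    _ = ∑ i ∈ s, σ i * (S * t ^ 2 / (1 - C * t)) := sum_congr rfl fun i hi => by
        rw [mul_sq_div_one_sub_mul_div (hw₀ i hi).ne', hgap i hi]
        field_simp [(hσ i hi).ne', hS.ne', hCt.ne']
    _ = (S * t) ^ 2 / (1 - C * t) := by rw [← sum_mul]; ring

end

theorem stmt1 {Ω : Type*} [MeasurableSpace Ω] {μ : Measure Ω} [IsProbabilityMeasure μ]
    (n : ℕ) (Z : ℕ → Ω → ℝ) (σ c : ℕ → ℝ)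
    (hσ : ∀ i ≤ n, 0 < σ i) (hc : ∀ i ≤ n, 0 < c i)
    (hint : ∀ i ≤ n, ∀ t : ℝ, 0 ≤ t → t < 1 / c i →
      Integrable (fun ω => exp (t * Z i ω)) μ)
    (h : ∀ i ≤ n, ∀ t : ℝ, 0 ≤ t → t < 1 / c i →
      Real.log (∫ ω, exp (t * Z i ω) ∂μ) ≤ (σ i * t) ^ 2 / (1 - c i * t)) :
    ∀ t : ℝ, 0 ≤ t → t < 1 / (∑ i ∈ range (n + 1), c i) →
      Real.log (∫ ω, exp (t * ∑ i ∈ range (n + 1), Z i ω) ∂μ) ≤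
        ((∑ i ∈ range (n + 1), σ i) * t) ^ 2 / (1 - (∑ i ∈ range (n + 1), c i) * t) :=
  fun _ ht₀ ht => cgf_sum_le_of_cgf_le nonempty_range_add_one
    (fun i hi => hσ i (mem_range_succ_iff.mp hi)) (fun i hi => hc i (mem_range_succ_iff.mp hi))
    (fun i hi => hint i (mem_range_succ_iff.mp hi)) (fun i hi => h i (mem_range_succ_iff.mp hi))
    ht₀ ht
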